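/- Let m ≥ 2 and q ≥ 2 be integers (so that mq + 1 and q are coprime). Then: (i) ⌈k(mq+1)/q⌉ = km + 1 for all integers k with 1 ≤ k ≤ q; (ii) for every integer t ≥ 0, U^{t+1}·L^m = [[(t+1)m + 1, t+1],[m, 1]], a matrix [[a,b],[c,d]] with ad − bc = 1 and ad + bc = 2(t+1)m + 1. Consequently the middle-tunnel slope sequence of the (mq+1, q) torus knot, namely [1/(2m+1)], 4m+1, 6m+1, …, 2m(q−1)+1, coincides with its upper-tunnel slope sequence. -/

import Mathlib

/-- The matrix `U = [[1,1],[0,1]]`. -/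
def U : Matrix (Fin 2) (Fin 2) ℤ := !![1, 1; 0, 1]

/-- The matrix `L = [[1,0],[1,1]]`. -/
def L : Matrix (Fin 2) (Fin 2) ℤ := !![1, 0; 1, 1]

lemma U_pow (n : ℕ) : U ^ n = !![1, (n : ℤ); 0, 1] := by
  induction n with
  | zero => simp [Matrix.one_fin_two]
  | succ n ih =>
    rw [pow_succ, ih, U, Matrix.mul_fin_two]
    push_cast
    simp [add_comm]

lemma L_pow (n : ℕ) : L ^ n = !![1, 0; (n : ℤ), 1] := by
  induction n with
  | zero => simp [Matrix.one_fin_two]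
  | succ n ih =>
    rw [pow_succ, ih, L, Matrix.mul_fin_two]
    push_cast
    simp

lemma U_pow_mul_L_pow (a b : ℕ) :
    U ^ a * L ^ b = !![(a : ℤ) * b + 1, a; b, 1] := by
  rw [U_pow, L_pow, Matrix.mul_fin_two]
  simp [add_comm]

lemma Int.ceil_natCast_div_eq_one {K : Type*} [Field K] [LinearOrder K] [IsStrictOrderedRing K]
    [FloorRing K] {k q : ℕ} (hk : 1 ≤ k) (hkq : k ≤ q) : ⌈(k : K) / q⌉ = 1 := by
  have hq : (0 : K) < q := by exact_mod_cast hk.trans hkq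
  rw [Int.ceil_eq_iff, Int.cast_one, sub_self, div_pos_iff_of_pos_right hq, div_le_one hq]
  exact ⟨by exact_mod_cast hk, by exact_mod_cast hkq⟩

lemma ceil_mul_mul_add_one_div (m : ℕ) {k q : ℕ} (hk : 1 ≤ k) (hkq : k ≤ q) :
    ⌈((k : ℚ) * ((m : ℚ) * q + 1)) / q⌉ = (k : ℤ) * m + 1 := by
  have hq : (q : ℚ) ≠ 0 := by exact_mod_cast (by omega : q ≠ 0)
  have hsplit : (k : ℚ) * ((m : ℚ) * q + 1) / q = (k : ℚ) / q + ((k * m : ℕ) : ℚ) := by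
    push_cast
    field_simp
    ring
  rw [hsplit, Int.ceil_add_natCast, Int.ceil_natCast_div_eq_one hk hkq]
  push_cast
  ring

theorem stmt9_general (m q : ℕ) :
    Nat.Coprime (m * q + 1) q ∧
    (∀ k : ℕ, 1 ≤ k → k ≤ q →
      ⌈((k : ℚ) * ((m : ℚ) * q + 1)) / q⌉ = (k : ℤ) * m + 1) ∧
    (∀ t : ℕ,
      U ^ (t + 1) * L ^ m = !![((t : ℤ) + 1) * m + 1, (t : ℤ) + 1; (m : ℤ), 1] ∧
      (U ^ (t + 1) * L ^ m) 0 0 * (U ^ (t + 1) * L ^ m) 1 1 -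
        (U ^ (t + 1) * L ^ m) 0 1 * (U ^ (t + 1) * L ^ m) 1 0 = 1 ∧
      (U ^ (t + 1) * L ^ m) 0 0 * (U ^ (t + 1) * L ^ m) 1 1 +
        (U ^ (t + 1) * L ^ m) 0 1 * (U ^ (t + 1) * L ^ m) 1 0 =
          2 * ((t : ℤ) + 1) * m + 1) := by
  refine ⟨(Nat.coprime_mul_right_add_left 1 q m).mpr (Nat.coprime_one_left q),
    fun k hk hkq => ceil_mul_mul_add_one_div m hk hkq, fun t => ?_⟩
  have hM : U ^ (t + 1) * L ^ m = !![((t : ℤ) + 1) * m + 1, (t : ℤ) + 1; (m : ℤ), 1] := by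
    simpa using U_pow_mul_L_pow (t + 1) m
  refine ⟨hM, ?_, ?_⟩ <;> simp only [hM, Matrix.of_apply, Matrix.cons_val', Matrix.cons_val_zero,
    Matrix.cons_val_one, Matrix.empty_val', Matrix.cons_val_fin_one] <;> ring

/-- For `m, q ≥ 2`: `mq + 1` and `q` are coprime; (i) `⌈k(mq+1)/q⌉ = km + 1` for
`1 ≤ k ≤ q`; (ii) for every `t ≥ 0`, `U^(t+1)·L^m = [[(t+1)m+1, t+1],[m, 1]]`, a
matrix `[[a,b],[c,d]]` with `ad − bc = 1` and `ad + bc = 2(t+1)m + 1`. -/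
theorem stmt9 (m q : ℕ) (hm : 2 ≤ m) (hq : 2 ≤ q) :
    Nat.Coprime (m * q + 1) q ∧
    (∀ k : ℕ, 1 ≤ k → k ≤ q →
      ⌈((k : ℚ) * ((m : ℚ) * q + 1)) / q⌉ = (k : ℤ) * m + 1) ∧
    (∀ t : ℕ,
      U ^ (t + 1) * L ^ m = !![((t : ℤ) + 1) * m + 1, (t : ℤ) + 1; (m : ℤ), 1] ∧
      (U ^ (t + 1) * L ^ m) 0 0 * (U ^ (t + 1) * L ^ m) 1 1 -
        (U ^ (t + 1) * L ^ m) 0 1 * (U ^ (t + 1) * L ^ m) 1 0 = 1 ∧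
      (U ^ (t + 1) * L ^ m) 0 0 * (U ^ (t + 1) * L ^ m) 1 1 +
        (U ^ (t + 1) * L ^ m) 0 1 * (U ^ (t + 1) * L ^ m) 1 0 =
          2 * ((t : ℤ) + 1) * m + 1) :=
  stmt9_general m q
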